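/- arXiv:2112.04935 — 3 statements merged into one kernel-verified Lean document; each statement's English description precedes it below -/
import Mathlib

section
/- Let s, b, q and n be integers with s ≥ 2, b ≥ 2, q ≥ 3, n ≥ 1 satisfying n·s^n = b·f_q(b), where f_q(b) = b^{q−2} + b^{q−3} + ⋯ + b + 1. Set u = gcd(b, s) and v = gcd(f_q(b), s). Then s = u·v with gcd(u, v) = 1, u^n divides b, and the integer k = b/u^n divides n. -/
/-!
Since `f_q(b) ≡ 1 (mod b)`, the two factors `b` and `f_q(b)` of `n·s^n` are coprime, so `s`, which
divides their product, splits as `u·v` with `u ∣ b` and `v ∣ f_q(b)`. Then `u^n ∣ s^n` divides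
`b·f_q(b)` and is coprime to `f_q(b)`, so `u^n ∣ b`. Writing `b = u^n·k` and cancelling `u^n` leaves
`n·v^n = k·f_q(b)`, and `k ∣ b` is coprime to `v ∣ f_q(b)`, so `k ∣ n`.
-/

open Finset

namespace Nat

theorem coprime_self_geomSum (b : ℕ) {m : ℕ} (hm : m ≠ 0) :
    Coprime b (∑ j ∈ range m, b ^ j) := by
  obtain ⟨m, rfl⟩ := exists_eq_succ_of_ne_zero hm
  rw [sum_range_succ', pow_zero]
  simp only [pow_succ', ← mul_sum, coprime_mul_left_add_right, coprime_one_right_eq_true]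

section MulPowEq

variable {a c s m n : ℕ}

theorem eq_gcd_mul_gcd_of_mul_pow_eq (hac : Coprime a c) (hn : n ≠ 0)
    (h : m * s ^ n = a * c) : s = gcd a s * gcd c s := by
  have hs : s ∣ a * c := h ▸ dvd_mul_of_dvd_right (dvd_pow_self s hn) m
  rw [gcd_comm a, gcd_comm c]
  exact ((gcd_mul_gcd_eq_iff_dvd_mul_of_coprime hac).2 hs).symm

theorem pow_gcd_dvd_of_mul_pow_eq (hac : Coprime a c) (h : m * s ^ n = a * c) :
    gcd a s ^ n ∣ a := by
  have hdvd : gcd a s ^ n ∣ a * c :=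
    h ▸ dvd_mul_of_dvd_right (pow_dvd_pow_of_dvd (gcd_dvd_right a s) n) m
  exact (Coprime.pow_left n (hac.coprime_dvd_left (gcd_dvd_left a s))).dvd_of_dvd_mul_right hdvd

theorem div_pow_gcd_dvd_of_mul_pow_eq (hac : Coprime a c) (hn : n ≠ 0) (hs : s ≠ 0)
    (h : m * s ^ n = a * c) : a / gcd a s ^ n ∣ m := by
  set u := gcd a s
  set v := gcd c s
  obtain ⟨k, hk⟩ := pow_gcd_dvd_of_mul_pow_eq hac h
  have hu : 0 < u ^ n := pow_pos (gcd_pos_of_pos_right a (pos_of_ne_zero hs)) n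
  have hcancel : u ^ n * (m * v ^ n) = u ^ n * (k * c) := by
    calc u ^ n * (m * v ^ n) = m * (u * v) ^ n := by ring
      _ = a * c := by rw [← eq_gcd_mul_gcd_of_mul_pow_eq hac hn h, h]
      _ = u ^ n * (k * c) := by rw [hk, mul_assoc]
  have hkv : Coprime k (v ^ n) :=
    (hac.of_dvd (Dvd.intro_left _ hk.symm) (gcd_dvd_left c s)).pow_right n
  rw [hk, Nat.mul_div_cancel_left k hu]
  exact hkv.dvd_of_dvd_mul_right ⟨c, Nat.eq_of_mul_eq_mul_left hu hcancel⟩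

end MulPowEq

end Nat

theorem factorization_of_b_general (s b q n : ℕ) (hs : 2 ≤ s) (hq : 3 ≤ q)
    (hn : 1 ≤ n)
    (heq : n * s ^ n = b * ∑ j ∈ Finset.range (q - 1), b ^ j) :
    s = Nat.gcd b s * Nat.gcd (∑ j ∈ Finset.range (q - 1), b ^ j) s ∧
    Nat.Coprime (Nat.gcd b s) (Nat.gcd (∑ j ∈ Finset.range (q - 1), b ^ j) s) ∧
    Nat.gcd b s ^ n ∣ b ∧
    (b / Nat.gcd b s ^ n) ∣ n := by
  have hcop := Nat.coprime_self_geomSum b (show q - 1 ≠ 0 by omega)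
  exact ⟨Nat.eq_gcd_mul_gcd_of_mul_pow_eq hcop (by omega) heq,
    hcop.of_dvd (Nat.gcd_dvd_left b s) (Nat.gcd_dvd_left _ s),
    Nat.pow_gcd_dvd_of_mul_pow_eq hcop heq,
    Nat.div_pow_gcd_dvd_of_mul_pow_eq hcop (by omega) (by omega) heq⟩

/-- Let `s ≥ 2`, `b ≥ 2`, `q ≥ 3`, `n ≥ 1` satisfy `n·s^n = b·f_q(b)` with
`f_q(b) = b^{q−2} + ⋯ + b + 1`.  With `u = gcd(b, s)` and `v = gcd(f_q(b), s)`
we have `s = u·v`, `gcd(u, v) = 1`, `u^n ∣ b`, and `k = b/u^n` divides `n`. -/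
theorem factorization_of_b (s b q n : ℕ) (hs : 2 ≤ s) (hb : 2 ≤ b) (hq : 3 ≤ q)
    (hn : 1 ≤ n)
    (heq : n * s ^ n = b * ∑ j ∈ Finset.range (q - 1), b ^ j) :
    s = Nat.gcd b s * Nat.gcd (∑ j ∈ Finset.range (q - 1), b ^ j) s ∧
    Nat.Coprime (Nat.gcd b s) (Nat.gcd (∑ j ∈ Finset.range (q - 1), b ^ j) s) ∧
    Nat.gcd b s ^ n ∣ b ∧
    (b / Nat.gcd b s ^ n) ∣ n :=
  factorization_of_b_general s b q n hs hq hn heq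
end

section
/- Let s, b, q and n be integers with s ≥ 2, b ≥ 2, q ≥ 3, n ≥ 1 satisfying n·s^n = b·f_q(b), where f_q(b) = b^{q−2} + ⋯ + b + 1. Write s = u·v with u = gcd(b, s) and v = gcd(f_q(b), s). If u^{q−2} > v, then n > (u^{q−2}/v)^n ≥ (1 + 1/v)^n ≥ (1 + 1/s)^n. -/
/-- Let `s ≥ 2`, `b ≥ 2`, `q ≥ 3`, `n ≥ 1` satisfy `n·s^n = b·f_q(b)` with
`f_q(b) = b^{q−2} + ⋯ + b + 1`, and let `u = gcd(b, s)`, `v = gcd(f_q(b), s)`.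
If `u^{q−2} > v`, then `n > (u^{q−2}/v)^n ≥ (1 + 1/v)^n ≥ (1 + 1/s)^n`. -/
theorem case_u_large (s b q n : ℕ) (hs : 2 ≤ s) (hb : 2 ≤ b) (hq : 3 ≤ q)
    (hn : 1 ≤ n)
    (heq : n * s ^ n = b * ∑ j ∈ Finset.range (q - 1), b ^ j)
    (huv : Nat.gcd (∑ j ∈ Finset.range (q - 1), b ^ j) s < Nat.gcd b s ^ (q - 2)) :
    (n : ℝ) > ((Nat.gcd b s : ℝ) ^ (q - 2) /
        (Nat.gcd (∑ j ∈ Finset.range (q - 1), b ^ j) s : ℝ)) ^ n ∧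
    ((Nat.gcd b s : ℝ) ^ (q - 2) /
        (Nat.gcd (∑ j ∈ Finset.range (q - 1), b ^ j) s : ℝ)) ^ n ≥
      (1 + 1 / (Nat.gcd (∑ j ∈ Finset.range (q - 1), b ^ j) s : ℝ)) ^ n ∧
    (1 + 1 / (Nat.gcd (∑ j ∈ Finset.range (q - 1), b ^ j) s : ℝ)) ^ n ≥
      (1 + 1 / (s : ℝ)) ^ n := by
  set F := ∑ j ∈ Finset.range (q - 1), b ^ j with hF
  set u := Nat.gcd b s with hu
  set v := Nat.gcd F s with hv
  have hb0 : 0 < b := by omega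
  have hs0 : 0 < s := by omega
  have hu0 : 0 < u := Nat.gcd_pos_of_pos_left _ hb0
  have hv0 : 0 < v := Nat.gcd_pos_of_pos_right _ hs0
  -- F = b * m + 1
  have hq1 : q - 1 = (q - 2) + 1 := by omega
  have hFform : F = b * (∑ j ∈ Finset.range (q - 2), b ^ j) + 1 := by
    rw [hF, hq1, Finset.sum_range_succ']
    simp [pow_succ, Finset.mul_sum, mul_comm]
  have hcop : Nat.Coprime b F := by
    rw [hFform, add_comm]
    rw [Nat.coprime_add_mul_left_right]
    exact Nat.coprime_one_right b
  have hsBF : s ∣ b * F := by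
    have h1 : s ∣ s ^ n := dvd_pow_self s (by omega)
    have h2 : s ^ n ∣ n * s ^ n := dvd_mul_left _ _
    exact heq ▸ h1.trans h2
  have hsuv : s ∣ u * v := by
    have h := Nat.gcd_mul_right_dvd_mul_gcd s b F
    rw [Nat.gcd_eq_left hsBF, Nat.gcd_comm s b, Nat.gcd_comm s F] at h
    exact h
  have hcopuF : Nat.Coprime (u ^ n) F :=
    (hcop.coprime_dvd_left (Nat.gcd_dvd_left b s)).pow_left n
  have hunb : u ^ n ∣ b := by
    have h1 : u ^ n ∣ s ^ n := pow_dvd_pow_of_dvd (Nat.gcd_dvd_right b s) n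
    have h2 : u ^ n ∣ b * F := h1.trans (heq ▸ dvd_mul_left _ _)
    exact hcopuF.dvd_of_dvd_mul_right h2
  have hble : u ^ n ≤ b := Nat.le_of_dvd hb0 hunb
  -- n * v^n ≥ F
  have hnvF : F ≤ n * v ^ n := by
    have h1 : u ^ n * (n * v ^ n) ≥ b * F := by
      calc u ^ n * (n * v ^ n) = n * (u * v) ^ n := by ring
        _ ≥ n * s ^ n := by
            gcongr
            exact Nat.le_of_dvd (by positivity) hsuv
        _ = b * F := heq
    have h2 : u ^ n * F ≤ b * F := by gcongr
    exact Nat.le_of_mul_le_mul_left (h2.trans h1) (by positivity)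
  -- F > b^(q-2)
  have hFgt : b ^ (q - 2) < F := by
    have := hFform
    have hbpow : b ^ (q - 2) ≤ b * ∑ j ∈ Finset.range (q - 2), b ^ j := by
      have hsub : q - 3 ∈ Finset.range (q - 2) := by
        simp; omega
      have h1 : b ^ (q - 3) ≤ ∑ j ∈ Finset.range (q - 2), b ^ j :=
        Finset.single_le_sum (fun i _ => Nat.zero_le _) hsub
      calc b ^ (q - 2) = b * b ^ (q - 3) := by
            rw [← pow_succ']
            congr 1
            omega
        _ ≤ b * ∑ j ∈ Finset.range (q - 2), b ^ j := by gcongr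
    omega
  have key : u ^ ((q - 2) * n) < n * v ^ n := by
    calc u ^ ((q - 2) * n) = (u ^ n) ^ (q - 2) := by rw [← pow_mul, mul_comm]
      _ ≤ b ^ (q - 2) := Nat.pow_le_pow_left hble _
      _ < F := hFgt
      _ ≤ n * v ^ n := hnvF
  have hvle : v ≤ s := Nat.le_of_dvd hs0 (Nat.gcd_dvd_right F s)
  refine ⟨?_, ?_, ?_⟩
  · rw [gt_iff_lt, div_pow, div_lt_iff₀ (by positivity)]
    have : ((u : ℝ) ^ (q - 2)) ^ n = ((u ^ ((q - 2) * n) : ℕ) : ℝ) := by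
      push_cast
      rw [← pow_mul]
    rw [this]
    exact_mod_cast key
  · apply pow_le_pow_left₀ (by positivity)
    have hvR : (0 : ℝ) < v := by exact_mod_cast hv0
    have h1 : ((v : ℝ) + 1) ≤ (u : ℝ) ^ (q - 2) := by exact_mod_cast huv
    have h2 : (1 : ℝ) + 1 / v = ((v : ℝ) + 1) / v := by field_simp
    rw [h2, div_le_div_iff₀ hvR hvR]
    nlinarith
  · apply pow_le_pow_left₀ (by positivity)
    have hvR : (0 : ℝ) < v := by exact_mod_cast hv0
    have hvleR : (v : ℝ) ≤ s := by exact_mod_cast hvle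
    gcongr
end

section
/- Let s, b, q and n be integers with s ≥ 2, b ≥ 2, q ≥ 3, n ≥ 1 satisfying n·s^n = b·f_q(b), where f_q(b) = b^{q−2} + ⋯ + b + 1. Write s = u·v with u = gcd(b, s) and v = gcd(f_q(b), s). If 1 ≤ u^{q−2} < v, then 2·n^q > (v/u^{q−2})^n ≥ (1 + 1/(v−1))^n > (1 + 1/s)^n. -/
lemma geom_lt_aux (b k : ℕ) (hb : 2 ≤ b) :
    ∑ j ∈ Finset.range (k + 1), b ^ j < 2 * b ^ k := by
  induction k with
  | zero => simp
  | succ k ih =>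
    rw [Finset.sum_range_succ]
    have h : 2 * b ^ k ≤ b ^ (k + 1) := by
      rw [pow_succ]
      calc 2 * b ^ k = b ^ k * 2 := by ring
        _ ≤ b ^ k * b := Nat.mul_le_mul_left _ hb
    omega

/-- Let `s ≥ 2`, `b ≥ 2`, `q ≥ 3`, `n ≥ 1` satisfy `n·s^n = b·f_q(b)` with
`f_q(b) = b^{q−2} + ⋯ + b + 1`, and let `u = gcd(b, s)`, `v = gcd(f_q(b), s)`.
If `1 ≤ u^{q−2} < v`, then
`2·n^q > (v/u^{q−2})^n ≥ (1 + 1/(v−1))^n > (1 + 1/s)^n`. -/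
theorem case_v_large (s b q n : ℕ) (hs : 2 ≤ s) (hb : 2 ≤ b) (hq : 3 ≤ q)
    (hn : 1 ≤ n)
    (heq : n * s ^ n = b * ∑ j ∈ Finset.range (q - 1), b ^ j)
    (hu1 : 1 ≤ Nat.gcd b s ^ (q - 2))
    (huv : Nat.gcd b s ^ (q - 2) < Nat.gcd (∑ j ∈ Finset.range (q - 1), b ^ j) s) :
    2 * (n : ℝ) ^ q > ((Nat.gcd (∑ j ∈ Finset.range (q - 1), b ^ j) s : ℝ) /
        (Nat.gcd b s : ℝ) ^ (q - 2)) ^ n ∧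
    ((Nat.gcd (∑ j ∈ Finset.range (q - 1), b ^ j) s : ℝ) /
        (Nat.gcd b s : ℝ) ^ (q - 2)) ^ n ≥
      (1 + 1 / ((Nat.gcd (∑ j ∈ Finset.range (q - 1), b ^ j) s : ℝ) - 1)) ^ n ∧
    (1 + 1 / ((Nat.gcd (∑ j ∈ Finset.range (q - 1), b ^ j) s : ℝ) - 1)) ^ n >
      (1 + 1 / (s : ℝ)) ^ n := by
  set F := ∑ j ∈ Finset.range (q - 1), b ^ j with hF
  set u := Nat.gcd b s with hu
  set v := Nat.gcd F s with hv
  have hub : u ∣ b := Nat.gcd_dvd_left _ _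
  have hus : u ∣ s := Nat.gcd_dvd_right _ _
  have hvF : v ∣ F := Nat.gcd_dvd_left _ _
  have hvs : v ∣ s := Nat.gcd_dvd_right _ _
  have hupos : 1 ≤ u := Nat.gcd_pos_of_pos_left s (by omega : 0 < b)
  -- F ≡ 1 mod b, so coprime
  have hFdecomp : F = b * (∑ j ∈ Finset.range (q - 2), b ^ j) + 1 := by
    rw [hF, show q - 1 = (q - 2) + 1 from by omega, Finset.sum_range_succ']
    simp [pow_succ, Finset.mul_sum, mul_comm]
  have hcop : Nat.Coprime b F := by
    rw [hFdecomp, add_comm]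
    exact (Nat.coprime_add_mul_left_right b 1 _).mpr (Nat.coprime_one_right b)
  have hF1 : 1 ≤ F := by omega
  have hcopvb : Nat.Coprime v b := (hcop.coprime_dvd_right hvF).symm
  -- s = u * v
  have hcopuv : Nat.Coprime u v := Nat.Coprime.coprime_dvd_left hub (hcop.coprime_dvd_right hvF)
  have huvs : u * v ∣ s := Nat.Coprime.mul_dvd_of_dvd_of_dvd hcopuv hus hvs
  have hsbF : s ∣ b * F := by
    rw [← heq]
    exact Dvd.dvd.mul_left (dvd_pow_self s (by omega)) n
  have hsuv : s ∣ u * v := by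
    have h1 : Nat.gcd s (b * F) = s := Nat.gcd_eq_left hsbF
    have h2 := Nat.gcd_mul_right_dvd_mul_gcd s b F
    rw [h1] at h2
    simpa [hu, hv, Nat.gcd_comm] using h2
  have hsuv' : s = u * v := Nat.dvd_antisymm hsuv huvs
  -- v^n ∣ F
  have hvnbF : v ^ n ∣ b * F := by
    rw [← heq]
    exact Dvd.dvd.mul_left (pow_dvd_pow_of_dvd hvs n) n
  have hcopvnb : Nat.Coprime (v ^ n) b := hcopvb.pow_left n
  have hvnF : v ^ n ∣ F := hcopvnb.dvd_of_dvd_mul_left hvnbF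
  have hvnle : v ^ n ≤ F := Nat.le_of_dvd hF1 hvnF
  -- b ∣ n * u^n
  have hbdvd : b ∣ n * u ^ n * v ^ n := by
    have : b ∣ n * s ^ n := heq ▸ Dvd.intro F rfl
    rwa [hsuv', mul_pow, ← mul_assoc] at this
  have hbnu : b ∣ n * u ^ n := (hcopvnb.symm).dvd_of_dvd_mul_right hbdvd
  have hble : b ≤ n * u ^ n := Nat.le_of_dvd (by positivity) hbnu
  -- F < 2 * b^(q-2)
  have hFlt : F < 2 * b ^ (q - 2) := by
    rw [hF, show q - 1 = (q - 2) + 1 from by omega]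
    exact geom_lt_aux b (q - 2) hb
  -- key nat inequality
  have key : v ^ n < 2 * (n ^ (q - 2) * (u ^ (q - 2)) ^ n) := by
    calc v ^ n ≤ F := hvnle
      _ < 2 * b ^ (q - 2) := hFlt
      _ ≤ 2 * (n * u ^ n) ^ (q - 2) := by gcongr
      _ = 2 * (n ^ (q - 2) * (u ^ (q - 2)) ^ n) := by
          rw [mul_pow, ← pow_mul, ← pow_mul, Nat.mul_comm n (q - 2)]
  -- numeric facts
  have hv2 : 2 ≤ v := by omega
  have hvles : v ≤ s := Nat.le_of_dvd (by omega) hvs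
  have hUpos : (0:ℝ) < (u : ℝ) ^ (q - 2) := by positivity
  have hVpos : (0:ℝ) < (v : ℝ) := by exact_mod_cast (by omega : 0 < v)
  have hV1 : (1:ℝ) ≤ (v : ℝ) - 1 := by
    have : (2:ℝ) ≤ (v : ℝ) := by exact_mod_cast hv2
    linarith
  have hUleV : ((u : ℝ)) ^ (q - 2) ≤ (v : ℝ) - 1 := by
    have h : u ^ (q - 2) + 1 ≤ v := huv
    have : ((u ^ (q - 2) : ℕ) : ℝ) + 1 ≤ (v : ℝ) := by exact_mod_cast h
    push_cast at this ⊢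
    linarith
  refine ⟨?_, ?_, ?_⟩
  · -- first inequality
    rw [gt_iff_lt, div_pow, div_lt_iff₀ (by positivity)]
    calc ((v:ℝ)) ^ n < 2 * ((n:ℝ) ^ (q - 2) * ((u:ℝ) ^ (q - 2)) ^ n) := by
          exact_mod_cast key
      _ ≤ 2 * ((n:ℝ) ^ q * ((u:ℝ) ^ (q - 2)) ^ n) := by
          have hn1 : (1:ℝ) ≤ (n:ℝ) := by exact_mod_cast hn
          have h2 : (n:ℝ) ^ (q - 2) ≤ (n:ℝ) ^ q := pow_le_pow_right₀ hn1 (Nat.sub_le q 2)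
          have h3 : (0:ℝ) ≤ ((u:ℝ) ^ (q - 2)) ^ n := by positivity
          exact mul_le_mul_of_nonneg_left (mul_le_mul_of_nonneg_right h2 h3) (by norm_num)
      _ = 2 * (n:ℝ) ^ q * ((u:ℝ) ^ (q - 2)) ^ n := by ring
  · -- second inequality
    apply pow_le_pow_left₀
    · positivity
    · have h1 : 1 + 1 / ((v:ℝ) - 1) = (v:ℝ) / ((v:ℝ) - 1) := by
        field_simp
        ring
      rw [h1]
      apply div_le_div_of_nonneg_left (le_of_lt hVpos) hUpos hUleV
  · -- third inequality
    apply pow_lt_pow_left₀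
    · have hvlt : ((v:ℝ) - 1) < (s:ℝ) := by
        have : (v:ℝ) ≤ (s:ℝ) := by exact_mod_cast hvles
        linarith
      have := one_div_lt_one_div_of_lt (by linarith : (0:ℝ) < (v:ℝ) - 1) hvlt
      linarith
    · positivity
    · omega
end
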